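/- Let Z_1, Z_2 be independent standard Lévy(1/2) random variables, let x ∈ (0,1) and b > 0, and set ψ̄ = (b² - 1)/(b² + 1). Then P((1-x)·b²·Z_1 < (1+x)·Z_2) = (1/π)·arccos((ψ̄ - x)/(1 - ψ̄ x)); that is, this probability equals φ(x,b). -/

import Mathlib

/-!
If `G` is a standard normal variable then `1 / G²` is standard Lévy(1/2), so `Z₁, Z₂` may be
replaced by `1 / G₁², 1 / G₂²` for independent half-normal `G₁, G₂`, and the event becomes the
cone `G₂ < m G₁` with `m = √((1 + x) / ((1 - x) b²))`. Its probability is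
`(2/π) ∫₀^∞ e^{-u²/2} ∫₀^{mu} e^{-v²/2} dv du`, whose derivative in `m` is
`(2/π) ∫₀^∞ u e^{-(1+m²)u²/2} du = (2/π) / (1 + m²)`; hence it equals `(2/π) arctan m`.
Finally `(ψ̄ - x) / (1 - ψ̄ x) = (1 - m²) / (1 + m²) = cos (2 arctan m)`.
-/

open MeasureTheory ProbabilityTheory Filter

noncomputable section

/-- The law of a standard Lévy(1/2) random variable: density
`(2π)^{-1/2} z^{-3/2} exp(-1/(2z))` on `(0,∞)`, `0` elsewhere. -/
def levyHalf : Measure ℝ :=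
  volume.withDensity fun z =>
    ENNReal.ofReal (if 0 < z then
      (2 * Real.pi) ^ (-(1 : ℝ) / 2) * z ^ (-(3 : ℝ) / 2) * Real.exp (-1 / (2 * z))
    else 0)

open Set Real Topology

theorem integrable_exp_neg_sq_div_two : Integrable fun u : ℝ => exp (-u ^ 2 / 2) := by
  simpa [neg_div, div_eq_inv_mul, mul_comm] using
    integrable_exp_neg_mul_sq (b := (1 / 2 : ℝ)) (by norm_num)

theorem integral_Ioi_mul_exp_neg_mul_sq {c : ℝ} (hc : 0 < c) :
    ∫ u in Ioi (0 : ℝ), u * exp (-c * u ^ 2) = (2 * c)⁻¹ := by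
  have h := integral_mul_cexp_neg_mul_sq (b := (c : ℂ)) (by simpa using hc)
  rw [← Complex.ofReal_inj]
  push_cast
  rw [← h, ← integral_complex_ofReal]
  push_cast
  rfl

def gaussPrimitive (y : ℝ) : ℝ := ∫ v in (0 : ℝ)..y, exp (-v ^ 2 / 2)

theorem hasDerivAt_gaussPrimitive (y : ℝ) : HasDerivAt gaussPrimitive (exp (-y ^ 2 / 2)) y :=
  intervalIntegral.integral_hasDerivAt_right (Continuous.intervalIntegrable (by fun_prop) _ _)
    (Continuous.stronglyMeasurableAtFilter (by fun_prop) _ _) (by fun_prop)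

@[fun_prop]
theorem continuous_gaussPrimitive : Continuous gaussPrimitive :=
  continuous_iff_continuousAt.2 fun y => (hasDerivAt_gaussPrimitive y).continuousAt

theorem gaussPrimitive_nonneg {y : ℝ} (hy : 0 ≤ y) : 0 ≤ gaussPrimitive y :=
  intervalIntegral.integral_nonneg hy fun _ _ => (exp_pos _).le

theorem abs_gaussPrimitive_le (y : ℝ) : |gaussPrimitive y| ≤ ∫ v, exp (-v ^ 2 / 2) := by
  have h := intervalIntegral.norm_integral_le_integral_norm_uIoc (μ := volume)
    (f := fun v : ℝ => exp (-v ^ 2 / 2)) (a := 0) (b := y)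
  simp only [norm_of_nonneg (exp_pos _).le] at h
  exact h.trans (setIntegral_le_integral integrable_exp_neg_sq_div_two
    (ae_of_all _ fun _ => (exp_pos _).le))

theorem integrable_exp_mul_gaussPrimitive (m : ℝ) :
    Integrable fun u : ℝ => exp (-u ^ 2 / 2) * gaussPrimitive (m * u) := by
  refine (integrable_exp_neg_sq_div_two.mul_const (∫ v, exp (-v ^ 2 / 2))).mono'
    (Continuous.aestronglyMeasurable (by fun_prop)) (ae_of_all _ fun u => ?_)
  rw [norm_mul, norm_of_nonneg (exp_pos _).le, norm_eq_abs]
  exact mul_le_mul_of_nonneg_left (abs_gaussPrimitive_le _) (exp_pos _).le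

theorem hasDerivAt_integral_exp_mul_gaussPrimitive (m : ℝ) :
    HasDerivAt (fun m => ∫ u in Ioi (0 : ℝ), exp (-u ^ 2 / 2) * gaussPrimitive (m * u))
      (1 + m ^ 2)⁻¹ m := by
  have hderiv : ∀ m' u : ℝ, HasDerivAt (fun m => exp (-u ^ 2 / 2) * gaussPrimitive (m * u))
      (u * exp (-((1 + m' ^ 2) / 2) * u ^ 2)) m' := by
    intro m' u
    refine (((hasDerivAt_gaussPrimitive (m' * u)).comp m'
      ((hasDerivAt_id m').mul_const u)).const_mul (exp (-u ^ 2 / 2))).congr_deriv ?_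
    rw [one_mul, ← mul_assoc, ← exp_add, mul_comm]
    ring_nf
  have hbound : ∀ u ∈ Ioi (0 : ℝ), ∀ m' : ℝ,
      ‖u * exp (-((1 + m' ^ 2) / 2) * u ^ 2)‖ ≤ u * exp (-(1 / 2) * u ^ 2) := by
    intro u (hu : 0 < u) m'
    rw [norm_of_nonneg (by positivity)]
    gcongr
    nlinarith [mul_nonneg (sq_nonneg m') (sq_nonneg u)]
  have key := hasDerivAt_integral_of_dominated_loc_of_deriv_le (μ := volume.restrict (Ioi 0))
    (F := fun m u => exp (-u ^ 2 / 2) * gaussPrimitive (m * u))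
    (F' := fun m u => u * exp (-((1 + m ^ 2) / 2) * u ^ 2)) (x₀ := m) univ_mem
    (Eventually.of_forall fun _ => Continuous.aestronglyMeasurable (by fun_prop))
    (integrable_exp_mul_gaussPrimitive m).integrableOn
    (Continuous.aestronglyMeasurable (by fun_prop))
    ((ae_restrict_iff' measurableSet_Ioi).2 (ae_of_all _ fun u hu m' _ => hbound u hu m'))
    (integrable_mul_exp_neg_mul_sq (by norm_num)).integrableOn
    (ae_of_all _ fun u m' _ => hderiv m' u)
  refine key.2.congr_deriv ?_
  rw [integral_Ioi_mul_exp_neg_mul_sq (by positivity)]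
  ring

theorem integral_exp_mul_gaussPrimitive (m : ℝ) :
    ∫ u in Ioi (0 : ℝ), exp (-u ^ 2 / 2) * gaussPrimitive (m * u) = arctan m := by
  have hderiv (y : ℝ) : HasDerivAt (fun m => (∫ u in Ioi (0 : ℝ),
      exp (-u ^ 2 / 2) * gaussPrimitive (m * u)) - arctan m) 0 y :=
    ((hasDerivAt_integral_exp_mul_gaussPrimitive y).sub (hasDerivAt_arctan y)).congr_deriv
      (by simp)
  have h := is_const_of_deriv_eq_zero (fun y => (hderiv y).differentiableAt)
    (fun y => (hderiv y).deriv) m 0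
  simpa [gaussPrimitive, sub_eq_zero] using h

def halfNormal : Measure ℝ :=
  (volume.restrict (Ioi 0)).withDensity fun v => ENNReal.ofReal (√(2 / π) * exp (-v ^ 2 / 2))

theorem halfNormal_inter_Ioi (s : Set ℝ) : halfNormal (s ∩ Ioi 0) = halfNormal s := by
  rw [halfNormal, withDensity_apply', withDensity_apply',
    Measure.restrict_restrict' measurableSet_Ioi, Measure.restrict_restrict' measurableSet_Ioi,
    inter_assoc, inter_self]

theorem halfNormal_Iio {r : ℝ} (hr : 0 ≤ r) :
    halfNormal (Iio r) = ENNReal.ofReal (√(2 / π) * gaussPrimitive r) := by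
  have hs : MeasurableSet (Iio r ∩ Ioi 0) := measurableSet_Iio.inter measurableSet_Ioi
  rw [← halfNormal_inter_Ioi, halfNormal, withDensity_apply _ hs, Measure.restrict_restrict hs,
    inter_assoc, inter_self, Iio_inter_Ioi, ← ofReal_integral_eq_lintegral_ofReal,
    integral_const_mul, gaussPrimitive,
    intervalIntegral.integral_of_le hr, integral_Ioc_eq_integral_Ioo]
  · exact (integrable_exp_neg_sq_div_two.const_mul _).integrableOn
  · exact ae_of_all _ fun _ => by positivity

theorem hasDerivAt_inv_sq {v : ℝ} (hv : v ≠ 0) :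
    HasDerivAt (fun v : ℝ => (v ^ 2)⁻¹) (-2 / v ^ 3) v :=
  ((hasDerivAt_pow 2 v).inv (pow_ne_zero 2 hv)).congr_deriv (by field_simp; ring)

theorem image_inv_sq_Ioi : (fun v : ℝ => (v ^ 2)⁻¹) '' Ioi 0 = Ioi 0 := by
  refine Subset.antisymm (image_subset_iff.2 fun v (hv : 0 < v) => by simp; positivity)
    fun z (hz : 0 < z) => ⟨(√z)⁻¹, by simpa using hz, ?_⟩
  simp [inv_pow, sq_sqrt hz.le]

theorem injOn_inv_sq_Ioi : InjOn (fun v : ℝ => (v ^ 2)⁻¹) (Ioi 0) := by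
  intro u (hu : 0 < u) v (hv : 0 < v) h
  exact (pow_left_inj₀ hu.le hv.le two_ne_zero).1 (inv_injective h)

theorem levyHalf_density_inv_sq {v : ℝ} (hv : 0 < v) :
    2 / v ^ 3 * ((2 * π) ^ (-(1 : ℝ) / 2) * ((v ^ 2)⁻¹) ^ (-(3 : ℝ) / 2) *
      exp (-1 / (2 * (v ^ 2)⁻¹))) = √(2 / π) * exp (-v ^ 2 / 2) := by
  have h3 : ((v ^ 2)⁻¹ : ℝ) ^ (-(3 : ℝ) / 2) = v ^ 3 := by
    rw [← rpow_natCast, ← rpow_neg_one, ← rpow_natCast, ← rpow_mul hv.le, ← rpow_mul hv.le]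
    norm_num
  have hc : (2 * π) ^ (-(1 : ℝ) / 2) = (√(2 * π))⁻¹ := by
    rw [sqrt_eq_rpow, ← rpow_neg (by positivity)]; norm_num
  have h2 : √(2 / π) = 2 / √(2 * π) := by
    rw [sqrt_div zero_le_two, sqrt_mul zero_le_two]
    field_simp
    rw [sq_sqrt zero_le_two]
  rw [h3, hc, h2, show -1 / (2 * (v ^ 2)⁻¹) = -v ^ 2 / 2 by field_simp]
  field_simp

theorem levyHalf_eq_map_halfNormal : levyHalf = halfNormal.map fun v => (v ^ 2)⁻¹ := by
  have hφ : Measurable fun v : ℝ => (v ^ 2)⁻¹ := by fun_prop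
  have hrestrict : levyHalf = (volume.restrict (Ioi 0)).withDensity fun z => ENNReal.ofReal
      ((2 * π) ^ (-(1 : ℝ) / 2) * z ^ (-(3 : ℝ) / 2) * exp (-1 / (2 * z))) := by
    rw [← withDensity_indicator measurableSet_Ioi, levyHalf]
    congr with z
    by_cases hz : 0 < z <;> simp [hz]
  ext s hs
  have hs' : MeasurableSet ((fun v : ℝ => (v ^ 2)⁻¹) ⁻¹' s ∩ Ioi 0) :=
    (hφ hs).inter measurableSet_Ioi
  have himage :
      s ∩ Ioi 0 = (fun v : ℝ => (v ^ 2)⁻¹) '' ((fun v : ℝ => (v ^ 2)⁻¹) ⁻¹' s ∩ Ioi 0) := by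
    rw [image_preimage_inter, image_inv_sq_Ioi]
  rw [hrestrict, Measure.map_apply hφ hs, halfNormal, withDensity_apply _ hs,
    withDensity_apply _ (hφ hs), Measure.restrict_restrict hs, Measure.restrict_restrict (hφ hs),
    himage,
    lintegral_image_eq_lintegral_abs_deriv_mul hs'
      (fun v hv => (hasDerivAt_inv_sq (ne_of_gt hv.2)).hasDerivWithinAt)
      (injOn_inv_sq_Ioi.mono inter_subset_right)]
  refine setLIntegral_congr_fun hs' fun v ⟨_, (hv : 0 < v)⟩ => ?_
  rw [← ENNReal.ofReal_mul (abs_nonneg _), abs_div, abs_neg, abs_two, abs_of_pos (by positivity),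
    levyHalf_density_inv_sq hv]

instance : SFinite halfNormal := by
  unfold halfNormal; infer_instance

theorem lintegral_halfNormal {f : ℝ → ENNReal} (hf : Measurable f) :
    ∫⁻ v, f v ∂halfNormal = ∫⁻ v in Ioi 0, ENNReal.ofReal (√(2 / π) * exp (-v ^ 2 / 2)) * f v :=
  lintegral_withDensity_eq_lintegral_mul _ (by fun_prop) hf

theorem setOf_mul_inv_sq_lt_inter_Ioi {a d u : ℝ} (ha : 0 < a) (hd : 0 < d) (hu : 0 < u) :
    {v : ℝ | a * (u ^ 2)⁻¹ < d * (v ^ 2)⁻¹} ∩ Ioi 0 = Iio (√(d / a) * u) ∩ Ioi 0 := by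
  have hm : √(d / a) * u = √(d / a * u ^ 2) := by rw [sqrt_mul (by positivity), sqrt_sq hu.le]
  ext v
  simp only [mem_inter_iff, mem_ofPred_eq, mem_Iio, mem_Ioi, and_congr_left_iff]
  intro hv
  rw [hm, lt_sqrt hv.le, ← div_eq_mul_inv, ← div_eq_mul_inv,
    div_lt_div_iff₀ (by positivity) (by positivity), div_mul_eq_mul_div, lt_div_iff₀ ha]
  constructor <;> intro h <;> linarith

theorem halfNormal_prod_apply {a d : ℝ} (ha : 0 < a) (hd : 0 < d) :
    (halfNormal.prod halfNormal) {p : ℝ × ℝ | a * (p.1 ^ 2)⁻¹ < d * (p.2 ^ 2)⁻¹}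
      = ENNReal.ofReal (2 / π * arctan √(d / a)) := by
  have hE : MeasurableSet {p : ℝ × ℝ | a * (p.1 ^ 2)⁻¹ < d * (p.2 ^ 2)⁻¹} :=
    measurableSet_lt (by fun_prop) (by fun_prop)
  have hslice : ∀ u ∈ Ioi (0 : ℝ), ENNReal.ofReal (√(2 / π) * exp (-u ^ 2 / 2)) *
      halfNormal (Prod.mk u ⁻¹' {p : ℝ × ℝ | a * (p.1 ^ 2)⁻¹ < d * (p.2 ^ 2)⁻¹})
      = ENNReal.ofReal (2 / π * (exp (-u ^ 2 / 2) * gaussPrimitive (√(d / a) * u))) := by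
    intro u (hu : 0 < u)
    rw [← halfNormal_inter_Ioi, preimage_ofPred_eq, setOf_mul_inv_sq_lt_inter_Ioi ha hd hu,
      halfNormal_inter_Ioi, halfNormal_Iio (by positivity), ← ENNReal.ofReal_mul (by positivity)]
    congr 1
    linear_combination (exp (-u ^ 2 / 2) * gaussPrimitive (√(d / a) * u)) *
      mul_self_sqrt (by positivity : (0 : ℝ) ≤ 2 / π)
  rw [Measure.prod_apply hE, lintegral_halfNormal (measurable_measure_prodMk_left hE),
    setLIntegral_congr_fun measurableSet_Ioi hslice, ← ofReal_integral_eq_lintegral_ofReal,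
    integral_const_mul, integral_exp_mul_gaussPrimitive]
  · exact ((integrable_exp_mul_gaussPrimitive _).const_mul _).integrableOn
  · refine (ae_restrict_iff' measurableSet_Ioi).2 (ae_of_all _ fun u (hu : 0 < u) => ?_)
    have := gaussPrimitive_nonneg (by positivity : 0 ≤ √(d / a) * u)
    positivity

theorem measure_mul_lt_mul_of_levyHalf {Ω : Type*} [MeasurableSpace Ω] {μ : Measure Ω}
    [IsFiniteMeasure μ] {Z₁ Z₂ : Ω → ℝ} (h₁ : Measurable Z₁) (h₂ : Measurable Z₂)
    (hl₁ : μ.map Z₁ = levyHalf) (hl₂ : μ.map Z₂ = levyHalf) (hind : IndepFun Z₁ Z₂ μ) (a d : ℝ) :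
    μ {ω | a * Z₁ ω < d * Z₂ ω}
      = (halfNormal.prod halfNormal) {p | a * (p.1 ^ 2)⁻¹ < d * (p.2 ^ 2)⁻¹} := by
  have hφ : Measurable fun v : ℝ => (v ^ 2)⁻¹ := by fun_prop
  have hE : MeasurableSet {p : ℝ × ℝ | a * p.1 < d * p.2} :=
    measurableSet_lt (by fun_prop) (by fun_prop)
  have hlaw : μ.map (fun ω => (Z₁ ω, Z₂ ω))
      = (halfNormal.prod halfNormal).map (Prod.map (fun v => (v ^ 2)⁻¹) fun v => (v ^ 2)⁻¹) := by
    rw [hind.map_prod_eq_prod_map_map h₁.aemeasurable h₂.aemeasurable, hl₁, hl₂,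
      levyHalf_eq_map_halfNormal, Measure.map_prod_map _ _ hφ hφ]
  change μ ((fun ω => (Z₁ ω, Z₂ ω)) ⁻¹' {p | a * p.1 < d * p.2}) = _
  rw [← Measure.map_apply (h₁.prodMk h₂) hE, hlaw, Measure.map_apply (hφ.prodMap hφ) hE]
  rfl

theorem arccos_one_sub_sq_div_one_add_sq {m : ℝ} (hm : 0 ≤ m) :
    arccos ((1 - m ^ 2) / (1 + m ^ 2)) = 2 * arctan m := by
  have hcos : cos (2 * arctan m) = (1 - m ^ 2) / (1 + m ^ 2) := by
    rw [cos_two_mul, cos_sq_arctan]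
    field_simp
    ring
  rw [← hcos, arccos_cos (by linarith [arctan_nonneg.2 hm]) (by linarith [arctan_lt_pi_div_two m])]

theorem psiBar_sub_div_one_sub_psiBar_mul {x b : ℝ} (ha : (1 - x) * b ^ 2 ≠ 0) :
    ((b ^ 2 - 1) / (b ^ 2 + 1) - x) / (1 - (b ^ 2 - 1) / (b ^ 2 + 1) * x)
      = (1 - (1 + x) / ((1 - x) * b ^ 2)) / (1 + (1 + x) / ((1 - x) * b ^ 2)) := by
  have hb : b ^ 2 + 1 ≠ 0 := by positivity
  have hnum : (b ^ 2 - 1) / (b ^ 2 + 1) - x = ((1 - x) * b ^ 2 - (1 + x)) / (b ^ 2 + 1) := by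
    field_simp
    ring
  have hden : 1 - (b ^ 2 - 1) / (b ^ 2 + 1) * x = ((1 - x) * b ^ 2 + (1 + x)) / (b ^ 2 + 1) := by
    field_simp
    ring
  rw [hnum, hden, div_div_div_cancel_right₀ hb, one_sub_div ha, one_add_div ha,
    div_div_div_cancel_right₀ ha]

/-- If `Z₁, Z₂` are independent standard Lévy(1/2) random variables,
`x ∈ (0,1)`, `b > 0` and `ψ̄ = (b²-1)/(b²+1)`, then
`P((1-x)·b²·Z₁ < (1+x)·Z₂) = (1/π)·arccos((ψ̄-x)/(1-ψ̄x)) = φ(x,b)`. -/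
theorem levy_half_phi_prob
    {Ω : Type*} [MeasurableSpace Ω] (μ : Measure Ω) [IsProbabilityMeasure μ]
    (Z₁ Z₂ : Ω → ℝ) (h₁ : Measurable Z₁) (h₂ : Measurable Z₂)
    (hl₁ : μ.map Z₁ = levyHalf) (hl₂ : μ.map Z₂ = levyHalf)
    (hind : IndepFun Z₁ Z₂ μ) (x b : ℝ) (hx : x ∈ Set.Ioo (0 : ℝ) 1) (hb : 0 < b) :
    (μ {ω | (1 - x) * b ^ 2 * Z₁ ω < (1 + x) * Z₂ ω}).toReal
      = (1 / Real.pi) * Real.arccos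
          (((b ^ 2 - 1) / (b ^ 2 + 1) - x) / (1 - (b ^ 2 - 1) / (b ^ 2 + 1) * x)) := by
  have ha : 0 < (1 - x) * b ^ 2 := mul_pos (sub_pos.2 hx.2) (pow_pos hb 2)
  have hd : 0 < 1 + x := by linarith [hx.1]
  rw [psiBar_sub_div_one_sub_psiBar_mul ha.ne', ← sq_sqrt (div_pos hd ha).le,
    arccos_one_sub_sq_div_one_add_sq (sqrt_nonneg _),
    measure_mul_lt_mul_of_levyHalf h₁ h₂ hl₁ hl₂ hind, halfNormal_prod_apply ha hd,
    ENNReal.toReal_ofReal (by positivity)]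
  ring
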